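/- Let T be a countable nontrivial tree: a partial order in which for every x the set {z | z < x} is a chain, whose comparability graph is connected, and which contains an incomparable pair. Then the following are equivalent: (i) T is IE-homogeneous (every finite partial isomorphism extends to a surjective <-preserving map T → T); (ii) T is HE-homogeneous (every <-preserving map between finite subsets extends to a surjective <-preserving map T → T) and MB-homogeneous (every injective <-preserving map between finite subsets extends to a bijective <-preserving map T → T); (iii) T is IH-homogeneous (every finite partial isomorphism extends to a <-preserving map T → T) and for every x ∈ T there is y ∈ T with x ∥ y. -/

import Mathlib

/-- `x` and `y` are incomparable in a poset. -/
def Incomp {P : Type*} [PartialOrder P] (x y : P) : Prop := ¬ x ≤ y ∧ ¬ y ≤ x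

/-- A tree (semilinear order): a connected poset in which every set `{z | z < x}` is a
chain. -/
def IsTreePoset (T : Type*) [PartialOrder T] : Prop :=
  (∀ x : T, IsChain (· ≤ ·) {z : T | z < x}) ∧
    ∀ x y : T, Relation.ReflTransGen (fun a b : T => a ≤ b ∨ b ≤ a) x y

/-- A finite partial isomorphism of a poset `P`. -/
def IsFinPartIso {P : Type*} [PartialOrder P] (A : Finset P) (f : P → P) : Prop :=
  ∀ a₁ ∈ A, ∀ a₂ ∈ A, (a₁ ≤ a₂ ↔ f a₁ ≤ f a₂)

/-- `P` is IE-homogeneous: every finite partial isomorphism extends to a surjective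
`<`-preserving map `P → P`. -/
def IEHomogeneous (P : Type*) [PartialOrder P] : Prop :=
  ∀ (A : Finset P) (f : P → P), IsFinPartIso A f →
    ∃ g : P → P, StrictMono g ∧ Function.Surjective g ∧ ∀ a ∈ A, g a = f a

/-- `P` is HE-homogeneous: every `<`-preserving map between finite subsets extends to a
surjective `<`-preserving map `P → P`. -/
def HEHomogeneous (P : Type*) [PartialOrder P] : Prop :=
  ∀ (A : Finset P) (f : P → P), (∀ a₁ ∈ A, ∀ a₂ ∈ A, a₁ < a₂ → f a₁ < f a₂) →
    ∃ g : P → P, StrictMono g ∧ Function.Surjective g ∧ ∀ a ∈ A, g a = f a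

/-- `P` is MB-homogeneous: every injective `<`-preserving map between finite subsets
extends to a bijective `<`-preserving map `P → P`. -/
def MBHomogeneous (P : Type*) [PartialOrder P] : Prop :=
  ∀ (A : Finset P) (f : P → P), Set.InjOn f ↑A →
    (∀ a₁ ∈ A, ∀ a₂ ∈ A, a₁ < a₂ → f a₁ < f a₂) →
    ∃ g : P → P, StrictMono g ∧ Function.Bijective g ∧ ∀ a ∈ A, g a = f a

/-- `P` is IH-homogeneous: every finite partial isomorphism extends to a
`<`-preserving map `P → P`. -/
def IHHomogeneous (P : Type*) [PartialOrder P] : Prop :=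
  ∀ (A : Finset P) (f : P → P), IsFinPartIso A f →
    ∃ g : P → P, StrictMono g ∧ ∀ a ∈ A, g a = f a

/-!
If `T` is IE-homogeneous and `x₀ ∥ y₀`, extend `x ↦ x₀` to a surjective `<`-preserving map;
a preimage of `y₀` is then incomparable with `x`. Conversely, IH-homogeneity together with
incomparable points makes a tree rich: copying the configurations `c < x`, `c < a < b` and the
wedge `c' < c < p, y` with `p ∥ y` shows that there are no minimal or maximal points, that the
order is dense, and that finitely many points above `p` have a common lower bound above `p`.
A finite `<`-preserving map then extends by back-and-forth. A new point `t` is sent strictly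
between the images of the points below `t` (a chain, as `T` is a tree) and those above it,
avoiding the finitely many values already taken. A missing value `s` receives as preimage a point
incomparable with a common lower bound of the current domain, hence with the whole domain. Since
every new value is fresh, injectivity is preserved.
-/

theorem Incomp.symm {P : Type*} [PartialOrder P] {x y : P} (h : Incomp x y) : Incomp y x :=
  ⟨h.2, h.1⟩

theorem IsFinPartIso.strictMonoOn {P : Type*} [PartialOrder P] {A : Finset P} {f : P → P}
    (h : IsFinPartIso A f) : StrictMonoOn f A := fun a ha b hb hab =>
  lt_of_le_not_ge ((h a ha b hb).1 hab.le) fun hba => hab.not_ge ((h b hb a ha).2 hba)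

namespace IsTreePoset

variable {T : Type*} [PartialOrder T]

theorem le_or_le_of_le (hT : IsTreePoset T) {a b c : T} (ha : a ≤ c) (hb : b ≤ c) :
    a ≤ b ∨ b ≤ a := by
  rcases ha.eq_or_lt with rfl | ha
  · exact Or.inr hb
  rcases hb.eq_or_lt with rfl | hb
  · exact Or.inl ha.le
  rcases eq_or_ne a b with rfl | hne
  · exact Or.inl le_rfl
  exact hT.1 c ha hb hne

theorem exists_le_le (hT : IsTreePoset T) (x y : T) : ∃ c, c ≤ x ∧ c ≤ y := by
  induction hT.2 x y with
  | refl => exact ⟨x, le_rfl, le_rfl⟩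
  | tail _ hbc ih =>
    obtain ⟨c, hcx, hcb⟩ := ih
    rcases hbc with hby | hyb
    · exact ⟨c, hcx, hcb.trans hby⟩
    · rcases hT.le_or_le_of_le hcb hyb with hcy | hyc
      · exact ⟨c, hcx, hcy⟩
      · exact ⟨_, hyc.trans hcx, le_rfl⟩

theorem isCodirectedOrder (hT : IsTreePoset T) : IsCodirectedOrder T where
  directed := hT.exists_le_le

theorem exists_forall_le [Nonempty T] (hT : IsTreePoset T) (S : Finset T) :
    ∃ c, ∀ a ∈ S, c ≤ a :=
  have := hT.isCodirectedOrder
  S.finite_toSet.exists_ge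

theorem incomp_of_le (hT : IsTreePoset T) {y c a : T} (h : Incomp y c) (hca : c ≤ a) :
    Incomp y a :=
  ⟨fun hya => (hT.le_or_le_of_le hya hca).elim h.1 h.2, fun hay => h.2 (hca.trans hay)⟩

theorem exists_forall_incomp [Nonempty T] (hT : IsTreePoset T)
    (hinc : ∀ x : T, ∃ y, Incomp x y) (S : Finset T) : ∃ y, ∀ a ∈ S, Incomp y a := by
  obtain ⟨c, hc⟩ := hT.exists_forall_le S
  obtain ⟨y, hy⟩ := hinc c
  exact ⟨y, fun a ha => hT.incomp_of_le hy.symm (hc a ha)⟩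

theorem noMinOrder (hT : IsTreePoset T) (hinc : ∀ x : T, ∃ y, Incomp x y) : NoMinOrder T where
  exists_lt x := by
    obtain ⟨y, hy⟩ := hinc x
    obtain ⟨c, hcx, hcy⟩ := hT.exists_le_le x y
    exact ⟨c, hcx.lt_of_ne (by rintro rfl; exact hy.1 hcy)⟩

end IsTreePoset

namespace IHHomogeneous

variable {P : Type*} [PartialOrder P]

theorem exists_strictMono_comp_eq {ι : Type*} [Finite ι] (hIH : IHHomogeneous P) (u v : ι → P)
    (huv : ∀ i j, u i ≤ u j ↔ v i ≤ v j) : ∃ g : P → P, StrictMono g ∧ g ∘ u = v := by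
  classical
  have := Fintype.ofFinite ι
  -- `u` need not be injective, but `huv` makes `v` constant on the fibres of `u`
  have hf : ∀ i, Function.extend u v id (u i) = v i := by
    intro i
    have hex : ∃ j, u j = u i := ⟨i, rfl⟩
    have hj := Classical.choose_spec hex
    rw [Function.extend_def, dif_pos hex]
    exact le_antisymm ((huv _ i).1 hj.le) ((huv i _).1 hj.ge)
  have hiso : IsFinPartIso (Finset.univ.image u) (Function.extend u v id) := by
    intro a₁ h₁ a₂ h₂
    obtain ⟨i, -, rfl⟩ := Finset.mem_image.1 h₁
    obtain ⟨j, -, rfl⟩ := Finset.mem_image.1 h₂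
    rw [hf, hf]
    exact huv i j
  obtain ⟨g, hg, hgu⟩ := hIH _ _ hiso
  exact ⟨g, hg, funext fun i =>
    (hgu (u i) (Finset.mem_image_of_mem u (Finset.mem_univ i))).trans (hf i)⟩

theorem noMaxOrder [NoMinOrder P] (hIH : IHHomogeneous P) : NoMaxOrder P where
  exists_gt x := by
    obtain ⟨c, hc⟩ := exists_lt x
    obtain ⟨g, hg, hgu⟩ := hIH.exists_strictMono_comp_eq (fun _ : Unit => c) (fun _ => x)
      fun _ _ => iff_of_true le_rfl le_rfl
    have hgc : g c = x := congrFun hgu ()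
    exact ⟨g x, hgc.symm.trans_lt (hg hc)⟩

theorem denselyOrdered [NoMinOrder P] (hIH : IHHomogeneous P) : DenselyOrdered P where
  dense a b hab := by
    obtain ⟨c, hc⟩ := exists_lt a
    obtain ⟨g, hg, hgu⟩ := hIH.exists_strictMono_comp_eq ![c, b] ![a, b] (by
      intro i j
      fin_cases i <;> fin_cases j <;>
        simp [hab.le, (hc.trans hab).le, hab.not_ge, (hc.trans hab).not_ge])
    have hgc : g c = a := congrFun hgu 0
    have hgb : g b = b := congrFun hgu 1
    exact ⟨g a, hgc.symm.trans_lt (hg hc), (hg hab).trans_eq hgb⟩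

end IHHomogeneous

namespace IsTreePoset

variable {T : Type*} [PartialOrder T]

theorem exists_between_of_lt_of_lt (hT : IsTreePoset T) (hIH : IHHomogeneous T)
    (hinc : ∀ x : T, ∃ y, Incomp x y) {p q₁ q₂ : T} (h₁ : p < q₁) (h₂ : p < q₂) :
    ∃ z, p < z ∧ z < q₁ ∧ z < q₂ := by
  have := hT.noMinOrder hinc
  have := hIH.denselyOrdered
  by_cases hq₁₂ : q₁ ≤ q₂
  · obtain ⟨z, hpz, hzq⟩ := exists_between h₁
    exact ⟨z, hpz, hzq, hzq.trans_le hq₁₂⟩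
  by_cases hq₂₁ : q₂ ≤ q₁
  · obtain ⟨z, hpz, hzq⟩ := exists_between h₂
    exact ⟨z, hpz, hzq.trans_le hq₂₁, hzq⟩
  -- copy a wedge `c' < c < p, y` with `p ∥ y` onto `p < q₁, q₂`; the image of `c` lies between
  obtain ⟨y, hpy, hyp⟩ := hinc p
  obtain ⟨c, hcp, hcy⟩ := hT.exists_le_le p y
  have hcp : c < p := hcp.lt_of_ne (by rintro rfl; exact hpy hcy)
  have hcy : c < y := hcy.lt_of_ne (by rintro rfl; exact hyp hcp.le)
  obtain ⟨c', hc'⟩ := exists_lt c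
  obtain ⟨g, hg, hgu⟩ := hIH.exists_strictMono_comp_eq ![c', p, y] ![p, q₁, q₂] (by
    intro i j
    fin_cases i <;> fin_cases j <;>
      simp [hpy, hyp, hq₁₂, hq₂₁, h₁.le, h₂.le, h₁.not_ge, h₂.not_ge, (hc'.trans hcp).le,
        (hc'.trans hcy).le, (hc'.trans hcp).not_ge, (hc'.trans hcy).not_ge])
  have hgc' : g c' = p := congrFun hgu 0
  have hgp : g p = q₁ := congrFun hgu 1
  have hgy : g y = q₂ := congrFun hgu 2
  exact ⟨g c, hgc'.symm.trans_lt (hg hc'), (hg hcp).trans_eq hgp, (hg hcy).trans_eq hgy⟩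

theorem exists_between_finset (hT : IsTreePoset T) (hIH : IHHomogeneous T)
    (hinc : ∀ x : T, ∃ y, Incomp x y) (p : T) (U : Finset T) (hU : ∀ u ∈ U, p < u) :
    ∃ z, p < z ∧ ∀ u ∈ U, z < u := by
  classical
  induction U using Finset.induction with
  | empty =>
    have := hT.noMinOrder hinc
    have := hIH.noMaxOrder
    obtain ⟨z, hz⟩ := exists_gt p
    exact ⟨z, hz, by simp⟩
  | insert u U _ ih =>
    obtain ⟨z, hpz, hzU⟩ := ih fun v hv => hU v (Finset.mem_insert_of_mem hv)
    obtain ⟨w, hpw, hwz, hwu⟩ :=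
      hT.exists_between_of_lt_of_lt hIH hinc hpz (hU u (Finset.mem_insert_self u U))
    refine ⟨w, hpw, fun v hv => ?_⟩
    rcases Finset.mem_insert.1 hv with rfl | hv
    · exact hwu
    · exact hwz.trans (hzU v hv)

theorem exists_between_finset_notMem (hT : IsTreePoset T) (hIH : IHHomogeneous T)
    (hinc : ∀ x : T, ∃ y, Incomp x y) {p : T} {U : Finset T} (hU : ∀ u ∈ U, p < u)
    (F : Finset T) : ∃ z ∉ F, p < z ∧ ∀ u ∈ U, z < u := by
  classical
  obtain ⟨z, hpz, hz⟩ := hT.exists_between_finset hIH hinc p (U ∪ F.filter (p < ·))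
    (by simpa [or_imp, forall_and] using hU)
  exact ⟨z, fun hzF => lt_irrefl z (hz z (by simp [hzF, hpz])), hpz,
    fun u hu => hz u (by simp [hu])⟩

end IsTreePoset

structure FinStrictMonoMap (T : Type*) [PartialOrder T] where
  dom : Finset T
  toFun : T → T
  strictMonoOn : StrictMonoOn toFun dom

namespace FinStrictMonoMap

variable {T : Type*} [PartialOrder T]

instance : Preorder (FinStrictMonoMap T) where
  le p q := p.dom ⊆ q.dom ∧ Set.EqOn q.toFun p.toFun p.dom
  le_refl _ := ⟨subset_rfl, fun _ _ => rfl⟩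
  le_trans _ _ _ hpq hqr := ⟨hpq.1.trans hqr.1, fun _ hx => (hqr.2 (hpq.1 hx)).trans (hpq.2 hx)⟩

theorem dom_subset_of_le {p q : FinStrictMonoMap T} (h : p ≤ q) : p.dom ⊆ q.dom := h.1

theorem toFun_eq_of_le {p q : FinStrictMonoMap T} (h : p ≤ q) {x : T} (hx : x ∈ p.dom) :
    q.toFun x = p.toFun x :=
  h.2 hx

def Injective (p : FinStrictMonoMap T) : Prop := Set.InjOn p.toFun p.dom

theorem exists_le_insert (p : FinStrictMonoMap T) {t z : T} (ht : t ∉ p.dom)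
    (hlt : ∀ a ∈ p.dom, a < t → p.toFun a < z) (hgt : ∀ a ∈ p.dom, t < a → z < p.toFun a)
    (hz : z ∉ p.toFun '' p.dom) :
    ∃ q, p ≤ q ∧ t ∈ q.dom ∧ q.toFun t = z ∧ (p.Injective → q.Injective) := by
  classical
  have heq : Set.EqOn (Function.update p.toFun t z) p.toFun p.dom := fun a ha =>
    Function.update_of_ne (ne_of_mem_of_not_mem ha ht) _ _
  refine ⟨⟨insert t p.dom, Function.update p.toFun t z, ?_⟩, ⟨Finset.subset_insert _ _, heq⟩,
    Finset.mem_insert_self _ _, Function.update_self t z p.toFun, fun hinj => ?_⟩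
  · intro a ha b hb hab
    simp only [Finset.coe_insert, Set.mem_insert_iff, Finset.mem_coe] at ha hb
    rcases ha with rfl | ha <;> rcases hb with rfl | hb
    · exact absurd hab (lt_irrefl _)
    · rw [Function.update_self, heq hb]
      exact hgt b hb hab
    · rw [Function.update_self, heq ha]
      exact hlt a ha hab
    · rw [heq ha, heq hb]
      exact p.strictMonoOn ha hb hab
  · have hins : Set.InjOn (Function.update p.toFun t z) (insert t (p.dom : Set T)) := by
      rw [Set.injOn_insert (by simpa using ht), Function.update_self, heq.image_eq]
      exact ⟨hinj.congr heq.symm, hz⟩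
    dsimp only [Injective]
    rwa [Finset.coe_insert]

theorem exists_strictMono_surjective_extension [Countable T]
    (hforth : ∀ (p : FinStrictMonoMap T) (t : T),
      ∃ q, p ≤ q ∧ t ∈ q.dom ∧ (p.Injective → q.Injective))
    (hback : ∀ (p : FinStrictMonoMap T) (s : T),
      ∃ q, p ≤ q ∧ s ∈ q.toFun '' q.dom ∧ (p.Injective → q.Injective))
    (p : FinStrictMonoMap T) :
    ∃ g : T → T, StrictMono g ∧ Function.Surjective g ∧ Set.EqOn g p.toFun p.dom ∧
      (p.Injective → Function.Injective g) := by
  have := Encodable.ofCountable T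
  let 𝒟 : T ⊕ T → Order.Cofinal {q : FinStrictMonoMap T // p.Injective → q.Injective}
    | .inl t => ⟨{q | t ∈ q.1.dom}, fun q =>
        let ⟨q', hq', ht, hinj⟩ := hforth q.1 t
        ⟨⟨q', hinj ∘ q.2⟩, ht, hq'⟩⟩
    | .inr s => ⟨{q | s ∈ q.1.toFun '' q.1.dom}, fun q =>
        let ⟨q', hq', hs, hinj⟩ := hback q.1 s
        ⟨⟨q', hinj ∘ q.2⟩, hs, hq'⟩⟩
  let seq n := (Order.sequenceOfCofinals ⟨p, id⟩ 𝒟 n).1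
  have hmono : Monotone seq := fun m n h => Order.sequenceOfCofinals.monotone _ 𝒟 h
  let N (x : T) := Encodable.encode (Sum.inl x : T ⊕ T) + 1
  have hN (x : T) : x ∈ (seq (N x)).dom := Order.sequenceOfCofinals.encode_mem _ 𝒟 (.inl x)
  let g x := (seq (N x)).toFun x
  have hg {n : ℕ} {x : T} (hx : x ∈ (seq n).dom) : g x = (seq n).toFun x :=
    (toFun_eq_of_le (hmono (le_max_right n (N x))) (hN x)).symm.trans
      (toFun_eq_of_le (hmono (le_max_left n (N x))) hx)
  have hpair (x y : T) : ∃ n, x ∈ (seq n).dom ∧ y ∈ (seq n).dom :=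
    ⟨max (N x) (N y), dom_subset_of_le (hmono (le_max_left _ _)) (hN x),
      dom_subset_of_le (hmono (le_max_right _ _)) (hN y)⟩
  refine ⟨g, fun x y hxy => ?_, fun s => ?_, fun a ha => hg (n := 0) ha, fun hinj x y hxy => ?_⟩
  · obtain ⟨n, hx, hy⟩ := hpair x y
    rw [hg hx, hg hy]
    exact (seq n).strictMonoOn hx hy hxy
  · obtain ⟨a, ha, hs⟩ := Order.sequenceOfCofinals.encode_mem _ 𝒟 (.inr s)
    exact ⟨a, (hg ha).trans hs⟩
  · obtain ⟨n, hx, hy⟩ := hpair x y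
    rw [hg hx, hg hy] at hxy
    exact (Order.sequenceOfCofinals ⟨p, id⟩ 𝒟 n).2 hinj hx hy hxy

end FinStrictMonoMap

namespace IsTreePoset

variable {T : Type*} [PartialOrder T]

theorem exists_le_mem_dom (hT : IsTreePoset T) (hIH : IHHomogeneous T)
    (hinc : ∀ x : T, ∃ y, Incomp x y) (p : FinStrictMonoMap T) (t : T) :
    ∃ q, p ≤ q ∧ t ∈ q.dom ∧ (p.Injective → q.Injective) := by
  classical
  by_cases ht : t ∈ p.dom
  · exact ⟨p, le_rfl, ht, id⟩
  have := hT.noMinOrder hinc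
  obtain ⟨m, hlm, hmu⟩ : ∃ m, (∀ a ∈ p.dom, a < t → p.toFun a ≤ m) ∧
      ∀ a ∈ p.dom, t < a → m < p.toFun a := by
    rcases (p.dom.filter (· < t)).eq_empty_or_nonempty with hD | hD
    · have : Nonempty T := ⟨t⟩
      obtain ⟨c, hc⟩ := hT.exists_forall_le (p.dom.image p.toFun)
      obtain ⟨m, hm⟩ := exists_lt c
      refine ⟨m, fun a ha hat => ?_,
        fun a ha _ => hm.trans_le (hc _ (Finset.mem_image_of_mem _ ha))⟩
      simpa using Finset.filter_eq_empty_iff.1 hD ha hat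
    -- the points below `t` form a chain, so the largest one has the largest value
    obtain ⟨d, hdD, hdmax⟩ := Finset.exists_maximal hD
    rw [Finset.mem_filter] at hdD
    refine ⟨p.toFun d, fun a ha hat => ?_, fun a ha hta =>
      p.strictMonoOn hdD.1 ha (hdD.2.trans hta)⟩
    have had : a ≤ d := (hT.le_or_le_of_le hat.le hdD.2.le).elim id
      (hdmax (Finset.mem_filter.2 ⟨ha, hat⟩))
    exact p.strictMonoOn.monotoneOn ha hdD.1 had
  obtain ⟨z, hzF, hmz, hzU⟩ := hT.exists_between_finset_notMem hIH hinc
    (p := m) (U := (p.dom.filter (t < ·)).image p.toFun)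
    (Finset.forall_mem_image.2 fun a ha => hmu a (Finset.mem_filter.1 ha).1
      (Finset.mem_filter.1 ha).2)
    (p.dom.image p.toFun)
  obtain ⟨q, hpq, htq, -, hinj⟩ := p.exists_le_insert ht
    (fun a ha hat => (hlm a ha hat).trans_lt hmz)
    (fun a ha hta => hzU _ (Finset.mem_image_of_mem _ (Finset.mem_filter.2 ⟨ha, hta⟩)))
    (by simpa using hzF)
  exact ⟨q, hpq, htq, hinj⟩

theorem exists_le_mem_image (hT : IsTreePoset T) (hinc : ∀ x : T, ∃ y, Incomp x y)
    (p : FinStrictMonoMap T) (s : T) :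
    ∃ q, p ≤ q ∧ s ∈ q.toFun '' q.dom ∧ (p.Injective → q.Injective) := by
  by_cases hs : s ∈ p.toFun '' p.dom
  · exact ⟨p, le_rfl, hs, id⟩
  have : Nonempty T := ⟨s⟩
  obtain ⟨y, hy⟩ := hT.exists_forall_incomp hinc p.dom
  obtain ⟨q, hpq, hyq, hqy, hinj⟩ := p.exists_le_insert (fun h => (hy y h).1 le_rfl)
    (fun a ha hay => absurd hay.le (hy a ha).2) (fun a ha hya => absurd hya.le (hy a ha).1) hs
  exact ⟨q, hpq, ⟨y, hyq, hqy⟩, hinj⟩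

theorem heHomogeneous_and_mbHomogeneous [Countable T] (hT : IsTreePoset T)
    (hIH : IHHomogeneous T) (hinc : ∀ x : T, ∃ y, Incomp x y) :
    HEHomogeneous T ∧ MBHomogeneous T := by
  have hext (A : Finset T) (f : T → T) (hf : ∀ a₁ ∈ A, ∀ a₂ ∈ A, a₁ < a₂ → f a₁ < f a₂) :=
    FinStrictMonoMap.exists_strictMono_surjective_extension (hT.exists_le_mem_dom hIH hinc)
      (hT.exists_le_mem_image hinc) ⟨A, f, fun a ha b hb => hf a ha b hb⟩
  refine ⟨fun A f hf => ?_, fun A f hinj hf => ?_⟩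
  · obtain ⟨g, hg, hsurj, hgf, -⟩ := hext A f hf
    exact ⟨g, hg, hsurj, fun a ha => hgf ha⟩
  · obtain ⟨g, hg, hsurj, hgf, hginj⟩ := hext A f hf
    exact ⟨g, hg, ⟨hginj hinj, hsurj⟩, fun a ha => hgf ha⟩

end IsTreePoset

section Homogeneity

variable {P : Type*} [PartialOrder P]

theorem IEHomogeneous.ihHomogeneous (h : IEHomogeneous P) : IHHomogeneous P := fun A f hf =>
  let ⟨g, hg, _, hgf⟩ := h A f hf
  ⟨g, hg, hgf⟩

theorem HEHomogeneous.ieHomogeneous (h : HEHomogeneous P) : IEHomogeneous P := fun A f hf =>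
  h A f fun _ ha _ hb hab => hf.strictMonoOn ha hb hab

theorem IEHomogeneous.exists_incomp (h : IEHomogeneous P) {x₀ y₀ : P} (h₀ : Incomp x₀ y₀)
    (x : P) : ∃ y, Incomp x y := by
  obtain ⟨g, hg, hsurj, hgx⟩ := h {x} (fun _ => x₀) fun _ ha _ hb => by
    rw [Finset.mem_singleton.1 ha, Finset.mem_singleton.1 hb]
    exact iff_of_true le_rfl le_rfl
  obtain ⟨y, hy⟩ := hsurj y₀
  have hgx : g x = x₀ := hgx x (Finset.mem_singleton_self x)
  exact ⟨y, fun hxy => h₀.1 (hgx ▸ hy ▸ hg.monotone hxy),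
    fun hyx => h₀.2 (hgx ▸ hy ▸ hg.monotone hyx)⟩

end Homogeneity

/-- For a countable nontrivial tree `T`: `T` is IE iff it is both HE and MB, iff it is
IH and every point has an incomparable point. -/
theorem tree_IE_iff_HE_MB_iff_IH_incomp {T : Type*} [PartialOrder T] [Countable T]
    (hT : IsTreePoset T) (hnt : ∃ x y : T, Incomp x y) :
    (IEHomogeneous T ↔ HEHomogeneous T ∧ MBHomogeneous T) ∧
      (IEHomogeneous T ↔ IHHomogeneous T ∧ ∀ x : T, ∃ y : T, Incomp x y) := by
  obtain ⟨x₀, y₀, h₀⟩ := hnt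
  have hIE_iff : IEHomogeneous T ↔ IHHomogeneous T ∧ ∀ x : T, ∃ y : T, Incomp x y :=
    ⟨fun hIE => ⟨hIE.ihHomogeneous, hIE.exists_incomp h₀⟩,
      fun ⟨hIH, hinc⟩ => (hT.heHomogeneous_and_mbHomogeneous hIH hinc).1.ieHomogeneous⟩
  refine ⟨⟨fun hIE => ?_, fun hHM => hHM.1.ieHomogeneous⟩, hIE_iff⟩
  obtain ⟨hIH, hinc⟩ := hIE_iff.1 hIE
  exact hT.heHomogeneous_and_mbHomogeneous hIH hinc
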